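/- arXiv:1401.0857 — 4 statements merged into one kernel-verified Lean document; each statement's English description precedes it below -/
import Mathlib

section
/- Let G be a group, H a normal subgroup, and l an invariant pseudo length function on G bounded by 1. For any natural numbers s, s' ≥ 1 and t ≥ 1, the function l'(g) = (t/(t+1))·(l_{G/H}(gH))^{1/s} + (l(g))^{1/s'}/(t+1), where l_{G/H}(gH) = inf{l(gh) : h ∈ H}, is an invariant pseudo length function on G bounded by 1. -/
private lemma rpow_add_le_add_rpow_real {a b p : ℝ} (ha : 0 ≤ a) (hb : 0 ≤ b)
    (hp : 0 ≤ p) (hp1 : p ≤ 1) : (a + b) ^ p ≤ a ^ p + b ^ p := by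
  have key := NNReal.rpow_add_le_add_rpow a.toNNReal b.toNNReal hp hp1
  rw [← Real.toNNReal_add ha hb] at key
  have h2 := NNReal.coe_le_coe.2 key
  rw [NNReal.coe_add, NNReal.coe_rpow, NNReal.coe_rpow, NNReal.coe_rpow,
    Real.coe_toNNReal _ (add_nonneg ha hb), Real.coe_toNNReal _ ha,
    Real.coe_toNNReal _ hb] at h2
  exact h2

/-- The correction `l^{ss't}_H` of an invariant pseudo length function bounded by 1:
`l'(g) = (t/(t+1))·(l_{G/H}(gH))^{1/s} + (l g)^{1/s'}/(t+1)`,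
is an invariant pseudo length function bounded by 1. -/
theorem stmt_4 {G : Type*} [Group G] (l : G → ℝ)
    (hnn : ∀ g : G, 0 ≤ l g) (hone : l 1 = 0)
    (hsym : ∀ g : G, l g⁻¹ = l g)
    (hsub : ∀ g h : G, l (g * h) ≤ l g + l h)
    (hinv : ∀ g h : G, l (h⁻¹ * g * h) = l g)
    (hbd : ∀ g : G, l g ≤ 1)
    (H : Subgroup G) [H.Normal]
    (s s' t : ℕ) (hs : 1 ≤ s) (hs' : 1 ≤ s') (ht : 1 ≤ t) :
    let lq : G → ℝ := fun g => sInf {r : ℝ | ∃ h ∈ H, r = l (g * h)}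
    let l' : G → ℝ := fun g =>
      ((t : ℝ) / ((t : ℝ) + 1)) * (lq g) ^ ((1 : ℝ) / s) +
        (l g) ^ ((1 : ℝ) / s') / ((t : ℝ) + 1)
    (∀ g : G, 0 ≤ l' g) ∧
    l' 1 = 0 ∧
    (∀ g : G, l' g⁻¹ = l' g) ∧
    (∀ g h : G, l' (g * h) ≤ l' g + l' h) ∧
    (∀ g h : G, l' (h⁻¹ * g * h) = l' g) ∧
    (∀ g : G, l' g ≤ 1) := by
  intro lq l'
  -- basic set facts
  have hne : ∀ g : G, ({r : ℝ | ∃ h ∈ H, r = l (g * h)}).Nonempty :=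
    fun g => ⟨l g, 1, H.one_mem, by simp⟩
  have hbdd : ∀ g : G, BddBelow {r : ℝ | ∃ h ∈ H, r = l (g * h)} := by
    intro g
    exact ⟨0, fun r hr => by obtain ⟨h, _, rfl⟩ := hr; exact hnn _⟩
  have hlqnn : ∀ g : G, 0 ≤ lq g := by
    intro g
    exact le_csInf (hne g) (fun r hr => by obtain ⟨h, _, rfl⟩ := hr; exact hnn _)
  have hlqle : ∀ g : G, lq g ≤ l g := by
    intro g
    exact csInf_le (hbdd g) ⟨1, H.one_mem, by simp⟩
  have hlqone : lq 1 = 0 := le_antisymm (by simpa [hone] using hlqle 1) (hlqnn 1)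
  -- invariance of lq (under conjugation by arbitrary elements)
  have hlqconj : ∀ g k : G, lq (k⁻¹ * g * k) = lq g := by
    intro g k
    have hset : {r : ℝ | ∃ h ∈ H, r = l (k⁻¹ * g * k * h)} =
        {r : ℝ | ∃ h ∈ H, r = l (g * h)} := by
      ext r
      constructor
      · rintro ⟨h, hh, rfl⟩
        refine ⟨k * h * k⁻¹, Subgroup.Normal.conj_mem ‹H.Normal› h hh k, ?_⟩
        have : g * (k * h * k⁻¹) = k * (k⁻¹ * g * k * h) * k⁻¹ := by group
        rw [this]
        rw [show k * (k⁻¹ * g * k * h) * k⁻¹ = (k⁻¹)⁻¹ * (k⁻¹ * g * k * h) * k⁻¹ by group,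
          hinv]
      · rintro ⟨h, hh, rfl⟩
        refine ⟨k⁻¹ * h * k, by simpa using Subgroup.Normal.conj_mem ‹H.Normal› h hh k⁻¹, ?_⟩
        have : k⁻¹ * g * k * (k⁻¹ * h * k) = k⁻¹ * (g * h) * k := by group
        rw [this, hinv]
    simp only [lq, hset]
  -- symmetry of lq
  have hlqsym : ∀ g : G, lq g⁻¹ = lq g := by
    intro g
    have hset : {r : ℝ | ∃ h ∈ H, r = l (g⁻¹ * h)} =
        {r : ℝ | ∃ h ∈ H, r = l (g * h)} := by
      ext r
      constructor
      · rintro ⟨h, hh, rfl⟩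
        have hmem : g⁻¹ * h⁻¹ * g ∈ H := by
          simpa using Subgroup.Normal.conj_mem ‹H.Normal› h⁻¹ (H.inv_mem hh) g⁻¹
        refine ⟨g⁻¹ * h⁻¹ * g, hmem, ?_⟩
        have h1 : g * (g⁻¹ * h⁻¹ * g) = h⁻¹ * g := by group
        have h2 : (g⁻¹ * h)⁻¹ = h⁻¹ * g := by group
        rw [h1, ← h2, hsym]
      · rintro ⟨h, hh, rfl⟩
        refine ⟨g * h⁻¹ * g⁻¹, Subgroup.Normal.conj_mem ‹H.Normal› h⁻¹ (H.inv_mem hh) g, ?_⟩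
        have h1 : g⁻¹ * (g * h⁻¹ * g⁻¹) = h⁻¹ * g⁻¹ := by group
        have h2 : (g * h)⁻¹ = h⁻¹ * g⁻¹ := by group
        rw [h1, ← h2, hsym]
    simp only [lq, hset]
  -- subadditivity of lq
  have hlqsub : ∀ g₁ g₂ : G, lq (g₁ * g₂) ≤ lq g₁ + lq g₂ := by
    intro g₁ g₂
    have key : ∀ h₁ ∈ H, ∀ h₂ ∈ H, lq (g₁ * g₂) ≤ l (g₁ * h₁) + l (g₂ * h₂) := by
      intro h₁ hh₁ h₂ hh₂
      have hmem : l (g₁ * h₁ * (g₂ * h₂)) ∈ {r : ℝ | ∃ h ∈ H, r = l (g₁ * g₂ * h)} := by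
        refine ⟨(g₂⁻¹ * h₁ * g₂) * h₂, H.mul_mem
          (by simpa using Subgroup.Normal.conj_mem ‹H.Normal› h₁ hh₁ g₂⁻¹) hh₂, ?_⟩
        congr 1
        group
      calc lq (g₁ * g₂) ≤ l (g₁ * h₁ * (g₂ * h₂)) := csInf_le (hbdd _) hmem
        _ ≤ l (g₁ * h₁) + l (g₂ * h₂) := hsub _ _
    have h1 : ∀ h₁ ∈ H, lq (g₁ * g₂) - l (g₁ * h₁) ≤ lq g₂ := by
      intro h₁ hh₁
      refine le_csInf (hne g₂) ?_
      rintro r ⟨h₂, hh₂, rfl⟩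
      linarith [key h₁ hh₁ h₂ hh₂]
    have h2 : lq (g₁ * g₂) - lq g₂ ≤ lq g₁ := by
      refine le_csInf (hne g₁) ?_
      rintro r ⟨h₁, hh₁, rfl⟩
      linarith [h1 h₁ hh₁]
    linarith
  -- exponent facts
  have hs0 : (0 : ℝ) < s := by exact_mod_cast Nat.lt_of_lt_of_le Nat.zero_lt_one hs
  have hs0' : (0 : ℝ) < s' := by exact_mod_cast Nat.lt_of_lt_of_le Nat.zero_lt_one hs'
  have hc : 0 < (1 : ℝ) / s := by positivity
  have hc1 : (1 : ℝ) / s ≤ 1 := by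
    rw [div_le_one hs0]; exact_mod_cast hs
  have hc' : 0 < (1 : ℝ) / s' := by positivity
  have hc1' : (1 : ℝ) / s' ≤ 1 := by
    rw [div_le_one hs0']; exact_mod_cast hs'
  have ht0 : (0 : ℝ) < (t : ℝ) + 1 := by positivity
  have htr : (0 : ℝ) ≤ (t : ℝ) / ((t : ℝ) + 1) := by positivity
  refine ⟨?_, ?_, ?_, ?_, ?_, ?_⟩
  · intro g
    have h1 := Real.rpow_nonneg (hlqnn g) ((1 : ℝ) / s)
    have h2 := Real.rpow_nonneg (hnn g) ((1 : ℝ) / s')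
    simp only [l']
    positivity
  · simp only [l', hlqone, hone, Real.zero_rpow hc.ne', Real.zero_rpow hc'.ne',
      mul_zero, zero_div, add_zero]
  · intro g
    simp only [l', hlqsym g, hsym g]
  · intro g h
    have h1 : (lq (g * h)) ^ ((1 : ℝ) / s) ≤ (lq g) ^ ((1 : ℝ) / s) + (lq h) ^ ((1 : ℝ) / s) := by
      calc (lq (g * h)) ^ ((1 : ℝ) / s) ≤ (lq g + lq h) ^ ((1 : ℝ) / s) :=
            Real.rpow_le_rpow (hlqnn _) (hlqsub g h) hc.le
        _ ≤ _ := rpow_add_le_add_rpow_real (hlqnn g) (hlqnn h) hc.le hc1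
    have h2 : (l (g * h)) ^ ((1 : ℝ) / s') ≤ (l g) ^ ((1 : ℝ) / s') + (l h) ^ ((1 : ℝ) / s') := by
      calc (l (g * h)) ^ ((1 : ℝ) / s') ≤ (l g + l h) ^ ((1 : ℝ) / s') :=
            Real.rpow_le_rpow (hnn _) (hsub g h) hc'.le
        _ ≤ _ := rpow_add_le_add_rpow_real (hnn g) (hnn h) hc'.le hc1'
    simp only [l']
    have h3 := mul_le_mul_of_nonneg_left h1 htr
    have h4 : (l (g * h)) ^ ((1 : ℝ) / s') / ((t : ℝ) + 1) ≤
        ((l g) ^ ((1 : ℝ) / s') + (l h) ^ ((1 : ℝ) / s')) / ((t : ℝ) + 1) := by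
      gcongr
    calc ((t : ℝ) / ((t : ℝ) + 1)) * (lq (g * h)) ^ ((1 : ℝ) / s) +
          (l (g * h)) ^ ((1 : ℝ) / s') / ((t : ℝ) + 1)
        ≤ ((t : ℝ) / ((t : ℝ) + 1)) * ((lq g) ^ ((1 : ℝ) / s) + (lq h) ^ ((1 : ℝ) / s)) +
          ((l g) ^ ((1 : ℝ) / s') + (l h) ^ ((1 : ℝ) / s')) / ((t : ℝ) + 1) :=
          add_le_add h3 h4
      _ = _ := by ring
  · intro g h
    simp only [l', hlqconj g h, hinv g h]
  · intro g
    have h1 : (lq g) ^ ((1 : ℝ) / s) ≤ 1 :=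
      Real.rpow_le_one (hlqnn g) (le_trans (hlqle g) (hbd g)) hc.le
    have h2 : (l g) ^ ((1 : ℝ) / s') ≤ 1 :=
      Real.rpow_le_one (hnn g) (hbd g) hc'.le
    simp only [l']
    have h3 := mul_le_mul_of_nonneg_left h1 htr
    have h4 : (l g) ^ ((1 : ℝ) / s') / ((t : ℝ) + 1) ≤ 1 / ((t : ℝ) + 1) := by gcongr
    have key : (t : ℝ) / ((t : ℝ) + 1) + 1 / ((t : ℝ) + 1) = 1 := by field_simp
    linarith
end

section
/- For a finite group G, the conjugacy length l_c(g) = log|g^G| / log|G| (where g^G is the conjugacy class of g and G is nontrivial) is an invariant pseudo length function on G, i.e., l_c(1)=0, l_c(g)=l_c(g⁻¹), l_c(gh) ≤ l_c(g)+l_c(h), and l_c(h⁻¹gh)=l_c(g). -/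
open scoped Pointwise

private lemma conj_subset_mul {G : Type*} [Group G] (g h : G) :
    conjugatesOf (g * h) ⊆ conjugatesOf g * conjugatesOf h := by
  rintro x hx
  obtain ⟨c, hc⟩ := isConj_iff.mp hx
  exact ⟨c * g * c⁻¹, isConj_iff.mpr ⟨c, rfl⟩, c * h * c⁻¹, isConj_iff.mpr ⟨c, rfl⟩, by
    rw [← hc]; group⟩

/-- The conjugacy length `l_c(g) = log|g^G| / log|G|` on a finite group with at
least two elements is an invariant pseudo length function. -/
theorem stmt_7 {G : Type*} [Group G] [Fintype G] (hG : 2 ≤ Fintype.card G) :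
    let lc : G → ℝ := fun g =>
      Real.log (Nat.card {x : G // IsConj g x}) / Real.log (Fintype.card G)
    (∀ g : G, 0 ≤ lc g) ∧
    lc 1 = 0 ∧
    (∀ g : G, lc g⁻¹ = lc g) ∧
    (∀ g h : G, lc (g * h) ≤ lc g + lc h) ∧
    (∀ g h : G, lc (h⁻¹ * g * h) = lc g) := by
  intro lc
  have hcard : ∀ g : G, Nat.card {x : G // IsConj g x} = Nat.card (conjugatesOf g) := fun g => rfl
  have hpos : ∀ g : G, 0 < Nat.card (conjugatesOf g) := fun g =>
    Nat.card_pos_iff.mpr ⟨⟨⟨g, mem_conjugatesOf_self⟩⟩, Set.Finite.to_subtype (Set.toFinite _)⟩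
  have hlogG : 0 < Real.log (Fintype.card G) := Real.log_pos (by exact_mod_cast hG)
  refine ⟨fun g => ?_, ?_, fun g => ?_, fun g h => ?_, fun g h => ?_⟩
  · apply div_nonneg _ hlogG.le
    apply Real.log_nonneg
    exact_mod_cast (hpos g)
  · have : conjugatesOf (1 : G) = {1} := by
      ext x; simp [conjugatesOf, isConj_one_right, eq_comm, Set.mem_setOf_eq]
    simp only [lc, hcard, this]
    simp
  · have : Nat.card (conjugatesOf g⁻¹) = Nat.card (conjugatesOf g) := by
      apply Nat.card_congr
      refine ⟨fun x => ⟨x.1⁻¹, ?_⟩, fun x => ⟨x.1⁻¹, ?_⟩, fun x => by simp, fun x => by simp⟩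
      · obtain ⟨c, hc⟩ := isConj_iff.mp x.2
        exact isConj_iff.mpr ⟨c, by rw [← hc]; group⟩
      · obtain ⟨c, hc⟩ := isConj_iff.mp x.2
        exact isConj_iff.mpr ⟨c, by rw [← hc]; group⟩
    simp only [lc, hcard, this]
  · have key : Nat.card (conjugatesOf (g * h)) ≤
        Nat.card (conjugatesOf g) * Nat.card (conjugatesOf h) :=
      le_trans (Nat.card_mono (Set.toFinite _) (conj_subset_mul g h)) Set.natCard_mul_le
    simp only [lc, hcard, ← add_div]
    apply div_le_div_of_nonneg_right _ hlogG.le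
    calc Real.log (Nat.card (conjugatesOf (g * h)))
        ≤ Real.log ((Nat.card (conjugatesOf g)) * (Nat.card (conjugatesOf h))) := by
          apply Real.log_le_log (by exact_mod_cast hpos _)
          exact_mod_cast key
      _ = _ := Real.log_mul (by exact_mod_cast (hpos g).ne') (by exact_mod_cast (hpos h).ne')
  · have : conjugatesOf (h⁻¹ * g * h) = conjugatesOf g := by
      symm
      apply IsConj.conjugatesOf_eq
      exact isConj_iff.mpr ⟨h⁻¹, by group⟩
    simp only [lc, hcard, this]
end

section
/- Let G be a group with invariant pseudo length function l bounded by 1, H a normal subgroup, s ≥ 1 a natural number, and define l'(g) = (1/4)·γ(l(g)) for g ∈ H and l'(g) = (1/4)·γ(l(g)) + (1/3)·γ(inf{l(gh) : h ∈ H}) for g ∉ H, where γ : [0,∞) → [0,∞) is subadditive (γ(x+y) ≤ γ(x)+γ(y)), nondecreasing, with γ(0)=0 and γ(x) > 0 for x > 0. Then l' is an invariant pseudo length function on G. -/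
open scoped Classical

/-- The modified length function `l'` built from a subadditive nondecreasing
gauge `γ` (as in the proof of Theorem 4.1): `l'(g) = γ(l g)/4` for `g ∈ H`, and
`l'(g) = γ(l g)/4 + γ(inf{l(gh) : h ∈ H})/3` for `g ∉ H`, is an invariant
pseudo length function. -/
theorem stmt_16 {G : Type*} [Group G] (l : G → ℝ)
    (hnn : ∀ g : G, 0 ≤ l g) (hone : l 1 = 0)
    (hsym : ∀ g : G, l g⁻¹ = l g)
    (hsub : ∀ g h : G, l (g * h) ≤ l g + l h)
    (hinv : ∀ g h : G, l (h⁻¹ * g * h) = l g)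
    (hbd : ∀ g : G, l g ≤ 1)
    (H : Subgroup G) [H.Normal]
    (γ : ℝ → ℝ)
    (hγ0 : γ 0 = 0)
    (hγmono : Monotone γ)
    (hγsub : ∀ x y : ℝ, 0 ≤ x → 0 ≤ y → γ (x + y) ≤ γ x + γ y)
    (hγpos : ∀ x : ℝ, 0 < x → 0 < γ x) :
    let q : G → ℝ := fun g => sInf {r : ℝ | ∃ h ∈ H, r = l (g * h)}
    let l' : G → ℝ := fun g =>
      if g ∈ H then γ (l g) / 4 else γ (l g) / 4 + γ (q g) / 3
    (∀ g : G, 0 ≤ l' g) ∧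
    l' 1 = 0 ∧
    (∀ g : G, l' g⁻¹ = l' g) ∧
    (∀ g h : G, l' (g * h) ≤ l' g + l' h) ∧
    (∀ g h : G, l' (h⁻¹ * g * h) = l' g) := by
  intro q l'
  have hnorm : H.Normal := ‹H.Normal›
  have hγnn : ∀ x : ℝ, 0 ≤ x → 0 ≤ γ x := fun x hx => hγ0 ▸ hγmono hx
  have hSne : ∀ g : G, ({r : ℝ | ∃ h ∈ H, r = l (g * h)}).Nonempty :=
    fun g => ⟨l (g * 1), 1, H.one_mem, rfl⟩
  have hSbdd : ∀ g : G, BddBelow {r : ℝ | ∃ h ∈ H, r = l (g * h)} :=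
    fun g => ⟨0, by rintro r ⟨h, _, rfl⟩; exact hnn _⟩
  have hq_nonneg : ∀ g : G, 0 ≤ q g :=
    fun g => le_csInf (hSne g) (by rintro r ⟨h, _, rfl⟩; exact hnn _)
  have hq_le : ∀ g : G, ∀ h ∈ H, q g ≤ l (g * h) :=
    fun g h hh => csInf_le (hSbdd g) ⟨h, hh, rfl⟩
  -- cosets: if a⁻¹ * b ∈ H then q a = q b
  have hsub' : ∀ a b : G, a⁻¹ * b ∈ H →
      {r : ℝ | ∃ h ∈ H, r = l (b * h)} ⊆ {r : ℝ | ∃ h ∈ H, r = l (a * h)} := by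
    rintro a b hab r ⟨k, hk, rfl⟩
    exact ⟨(a⁻¹ * b) * k, H.mul_mem hab hk, by group⟩
  have key : ∀ a b : G, a⁻¹ * b ∈ H → q a = q b := by
    intro a b hab
    have hab' : b⁻¹ * a ∈ H := by
      have := H.inv_mem hab
      rwa [mul_inv_rev, inv_inv] at this
    exact le_antisymm (csInf_le_csInf (hSbdd a) (hSne b) (hsub' a b hab))
      (csInf_le_csInf (hSbdd b) (hSne a) (hsub' b a hab'))
  have hq_inv_le : ∀ g : G, q g⁻¹ ≤ q g := by
    intro g
    apply le_csInf (hSne g)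
    rintro r ⟨k, hk, rfl⟩
    have hmem : g * k⁻¹ * g⁻¹ ∈ H := hnorm.conj_mem _ (H.inv_mem hk) g
    calc q g⁻¹ ≤ l (g⁻¹ * (g * k⁻¹ * g⁻¹)) := hq_le g⁻¹ _ hmem
      _ = l (g * k) := by
          rw [show g⁻¹ * (g * k⁻¹ * g⁻¹) = (g * k)⁻¹ by group, hsym]
  have hq_inv : ∀ g : G, q g⁻¹ = q g := by
    intro g
    refine le_antisymm (hq_inv_le g) ?_
    have := hq_inv_le g⁻¹
    rwa [inv_inv] at this
  have hq_conj_le : ∀ g k : G, q (k⁻¹ * g * k) ≤ q g := by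
    intro g k
    apply le_csInf (hSne g)
    rintro r ⟨a, ha, rfl⟩
    have hmem : k⁻¹ * a * k ∈ H := hnorm.conj_mem' _ ha k
    calc q (k⁻¹ * g * k) ≤ l ((k⁻¹ * g * k) * (k⁻¹ * a * k)) :=
          hq_le _ _ hmem
      _ = l (g * a) := by
          rw [show (k⁻¹ * g * k) * (k⁻¹ * a * k) = k⁻¹ * (g * a) * k by group, hinv]
  have hq_conj : ∀ g k : G, q (k⁻¹ * g * k) = q g := by
    intro g k
    refine le_antisymm (hq_conj_le g k) ?_
    have := hq_conj_le (k⁻¹ * g * k) k⁻¹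
    rwa [show k⁻¹⁻¹ * (k⁻¹ * g * k) * k⁻¹ = g by group] at this
  have hq_sub : ∀ g h : G, q (g * h) ≤ q g + q h := by
    intro g h
    have step1 : ∀ b ∈ H, q (g * h) - q g ≤ l (h * b) := by
      intro b hb
      have step2 : ∀ a ∈ H, q (g * h) - l (h * b) ≤ l (g * a) := by
        intro a ha
        have hmem : (h⁻¹ * a * h) * b ∈ H := H.mul_mem (hnorm.conj_mem' _ ha h) hb
        have : q (g * h) ≤ l (g * a) + l (h * b) :=
          calc q (g * h) ≤ l ((g * h) * ((h⁻¹ * a * h) * b)) := hq_le _ _ hmem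
            _ = l ((g * a) * (h * b)) := by
                rw [show (g * h) * ((h⁻¹ * a * h) * b) = (g * a) * (h * b) by group]
            _ ≤ l (g * a) + l (h * b) := hsub _ _
        linarith
      have : q (g * h) - l (h * b) ≤ q g :=
        le_csInf (hSne g) (by rintro r ⟨a, ha, rfl⟩; exact step2 a ha)
      linarith
    have : q (g * h) - q g ≤ q h :=
      le_csInf (hSne h) (by rintro r ⟨b, hb, rfl⟩; exact step1 b hb)
    linarith
  have hγtri : ∀ g h : G, γ (l (g * h)) ≤ γ (l g) + γ (l h) :=
    fun g h => le_trans (hγmono (hsub g h)) (hγsub _ _ (hnn g) (hnn h))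
  have hmemiff : ∀ g : G, g⁻¹ ∈ H ↔ g ∈ H := fun g => H.inv_mem_iff
  refine ⟨?_, ?_, ?_, ?_, ?_⟩
  · intro g
    simp only [l']
    split
    · exact div_nonneg (hγnn _ (hnn g)) (by norm_num)
    · have := hγnn _ (hq_nonneg g)
      have := hγnn _ (hnn g)
      linarith
  · simp only [l', if_pos H.one_mem, hone, hγ0]
    norm_num
  · intro g
    simp only [l']
    by_cases hg : g ∈ H
    · rw [if_pos hg, if_pos ((hmemiff g).2 hg), hsym]
    · rw [if_neg hg, if_neg (fun h => hg ((hmemiff g).1 h)), hsym, hq_inv]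
  · intro g h
    simp only [l']
    by_cases hg : g ∈ H <;> by_cases hh : h ∈ H
    · have hgh : g * h ∈ H := H.mul_mem hg hh
      rw [if_pos hg, if_pos hh, if_pos hgh]
      have := hγtri g h
      linarith
    · have hgh : g * h ∉ H := fun hc => hh (by simpa using H.mul_mem (H.inv_mem hg) hc)
      rw [if_pos hg, if_neg hh, if_neg hgh]
      have hqq : q (g * h) = q h := key _ _ (by
        have : (g * h)⁻¹ * h = h⁻¹ * g⁻¹ * h := by group
        rw [this]
        exact hnorm.conj_mem' _ (H.inv_mem hg) h)
      rw [hqq]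
      have := hγtri g h
      linarith
    · have hgh : g * h ∉ H := fun hc => hg (by simpa using H.mul_mem hc (H.inv_mem hh))
      rw [if_neg hg, if_pos hh, if_neg hgh]
      have hqq : q (g * h) = q g := key _ _ (by
        rw [show (g * h)⁻¹ * g = h⁻¹ by group]
        exact H.inv_mem hh)
      rw [hqq]
      have := hγtri g h
      linarith
    · rw [if_neg hg, if_neg hh]
      have h1 := hγtri g h
      by_cases hgh : g * h ∈ H
      · rw [if_pos hgh]
        have := hγnn _ (hq_nonneg g)
        have := hγnn _ (hq_nonneg h)
        linarith
      · rw [if_neg hgh]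
        have h2 : γ (q (g * h)) ≤ γ (q g) + γ (q h) :=
          le_trans (hγmono (hq_sub g h)) (hγsub _ _ (hq_nonneg g) (hq_nonneg h))
        linarith
  · intro g k
    simp only [l']
    have hmem : k⁻¹ * g * k ∈ H ↔ g ∈ H := by
      constructor
      · intro hc
        have := hnorm.conj_mem _ hc k
        rwa [show k * (k⁻¹ * g * k) * k⁻¹ = g by group] at this
      · intro hc
        exact hnorm.conj_mem' _ hc k
    rw [hinv, hq_conj]
    by_cases hg : g ∈ H
    · rw [if_pos hg, if_pos (hmem.2 hg)]
    · rw [if_neg hg, if_neg (fun hc => hg (hmem.1 hc))]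
end

section
/- Let P be a finitely generated group whose colored Cayley graph has the finite model property in the following sense: for every natural number n there is a finite group Q (with the same generating set labels) such that the n-ball around the identity in the Cayley graph of P is isomorphic as a labeled graph to the n-ball around the identity in the Cayley graph of Q. Then P is LEF: for every finite subset D ⊆ P there is a finite group C and an injective map φ : D → C such that φ(hg) = φ(h)φ(g) whenever h, g, hg ∈ D. -/
/-- If the labeled Cayley graph of a finitely generated group `P` (with finite
symmetric generating set `S`) has the finite model property — every `n`-ball
around the identity is label-isomorphic to the `n`-ball around the identity in
the Cayley graph of some finite group — then `P` is LEF. -/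
theorem stmt_17 {P : Type*} [Group P] (S : Finset P)
    (hSsym : ∀ s ∈ S, s⁻¹ ∈ S)
    (hSgen : Subgroup.closure (S : Set P) = ⊤)
    (hFMP : ∀ n : ℕ, ∃ (Q : Type) (_ : Group Q) (_ : Fintype Q)
      (σ : P → Q) (f : P → Q),
      -- f is a labeled-graph isomorphism from the n-ball of P onto the n-ball of Q
      f 1 = 1 ∧
      Set.InjOn f {x : P | ∃ w : List P, (∀ u ∈ w, u ∈ S) ∧ w.length ≤ n ∧ w.prod = x} ∧
      f '' {x : P | ∃ w : List P, (∀ u ∈ w, u ∈ S) ∧ w.length ≤ n ∧ w.prod = x}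
        = {y : Q | ∃ w : List P, (∀ u ∈ w, u ∈ S) ∧ w.length ≤ n ∧ (w.map σ).prod = y} ∧
      (∀ x s : P, s ∈ S →
        (∃ w : List P, (∀ u ∈ w, u ∈ S) ∧ w.length ≤ n ∧ w.prod = x) →
        (∃ w : List P, (∀ u ∈ w, u ∈ S) ∧ w.length ≤ n ∧ w.prod = x * s) →
        f (x * s) = f x * σ s)) :
    ∀ D : Finset P, ∃ (C : Type) (_ : Group C) (_ : Fintype C) (φ : P → C),
      Set.InjOn φ (D : Set P) ∧
      ∀ g ∈ D, ∀ h ∈ D, g * h ∈ D → φ (g * h) = φ g * φ h := by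
  intro D
  -- every element of P is a product of generators
  have hword : ∀ g : P, ∃ w : List P, (∀ u ∈ w, u ∈ S) ∧ w.prod = g := by
    intro g
    have hg : g ∈ Subgroup.closure (S : Set P) := by rw [hSgen]; trivial
    induction hg using Subgroup.closure_induction with
    | mem x hx => exact ⟨[x], by simpa using hx, by simp⟩
    | one => exact ⟨[], by simp, by simp⟩
    | mul x y _ _ hx hy =>
        obtain ⟨w1, h1, e1⟩ := hx; obtain ⟨w2, h2, e2⟩ := hy
        refine ⟨w1 ++ w2, ?_, by simp [e1, e2]⟩
        intro u hu
        rcases List.mem_append.1 hu with h | h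
        exacts [h1 u h, h2 u h]
    | inv x _ hx =>
        obtain ⟨w, h1, e1⟩ := hx
        refine ⟨(w.map (fun x => x⁻¹)).reverse, ?_, ?_⟩
        · intro u hu
          rw [List.mem_reverse, List.mem_map] at hu
          obtain ⟨v, hv, rfl⟩ := hu
          exact hSsym v (h1 v hv)
        · rw [← List.prod_inv_reverse, e1]
  choose L hLS hLprod using hword
  set m : ℕ := D.sup (fun d => (L d).length) with hm
  have hDball : ∀ d ∈ D, ∃ w : List P,
      (∀ u ∈ w, u ∈ S) ∧ w.length ≤ m ∧ w.prod = d := by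
    intro d hd
    exact ⟨L d, hLS d, Finset.le_sup (f := fun d => (L d).length) hd, hLprod d⟩
  obtain ⟨Q, _, _, σ, f, h1, h2, h3, h4⟩ := hFMP (2 * m)
  -- key lemma: translating along a word
  have key : ∀ w : List P, ∀ x : P, ∀ wx : List P,
      (∀ u ∈ w, u ∈ S) → (∀ u ∈ wx, u ∈ S) →
      wx.length + w.length ≤ 2 * m → wx.prod = x →
      f (x * w.prod) = f x * (w.map σ).prod := by
    intro w
    induction w with
    | nil => intro x wx _ _ _ _; simp
    | cons s w' ih =>
        intro x wx hwS hwxS hlen hprod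
        have hs : s ∈ S := hwS s List.mem_cons_self
        have hw'S : ∀ u ∈ w', u ∈ S := fun u hu => hwS u (List.mem_cons_of_mem s hu)
        have hwxs : ∀ u ∈ wx ++ [s], u ∈ S := by
          intro u hu
          rcases List.mem_append.1 hu with h | h
          · exact hwxS u h
          · simp at h; subst h; exact hs
        have hlen' : (wx ++ [s]).length + w'.length ≤ 2 * m := by
          simp only [List.length_append, List.length_cons, List.length_nil] at hlen ⊢
          omega
        have hlen0 : wx.length + (w'.length + 1) ≤ 2 * m := by
          simpa using hlen
        have hlwx : wx.length ≤ 2 * m := by omega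
        have hlwxs : (wx ++ [s]).length ≤ 2 * m := by
          simp; omega
        have hxs : f (x * s) = f x * σ s :=
          h4 x s hs ⟨wx, hwxS, hlwx, hprod⟩ ⟨wx ++ [s], hwxs, hlwxs, by simp [hprod]⟩
        have := ih (x * s) (wx ++ [s]) hw'S hwxs hlen' (by simp [hprod])
        calc f (x * (s :: w').prod) = f ((x * s) * w'.prod) := by
              rw [List.prod_cons, mul_assoc]
          _ = f (x * s) * (w'.map σ).prod := this
          _ = f x * ((s :: w').map σ).prod := by
              rw [hxs, List.map_cons, List.prod_cons, mul_assoc]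
  refine ⟨Q, inferInstance, inferInstance, f, ?_, ?_⟩
  · intro a ha b hb hab
    obtain ⟨wa, hwa, hla, hpa⟩ := hDball a ha
    obtain ⟨wb, hwb, hlb, hpb⟩ := hDball b hb
    exact h2 ⟨wa, hwa, by omega, hpa⟩ ⟨wb, hwb, by omega, hpb⟩ hab
  · intro g hg h hh _
    obtain ⟨wg, hwg, hlg, hpg⟩ := hDball g hg
    obtain ⟨wh, hwh, hlh, hph⟩ := hDball h hh
    have e1 : f (g * h) = f g * (wh.map σ).prod := by
      rw [← hph]
      exact key wh g wg hwh hwg (by omega) hpg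
    have e2 : f h = (wh.map σ).prod := by
      have := key wh 1 [] hwh (by simp) (by simp; omega) rfl
      simpa [h1, hph] using this
    rw [e1, e2]
end
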